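/- arXiv:1902.02131 — 3 statements merged into one kernel-verified Lean document; each statement's English description precedes it below -/
import Mathlib

section
/- The Grundy value of a position (x_1,...,x_n) in the cyclic Nimhoff game with parameter h equals (⊕_i ⌊x_i/h⌋)·h + ((Σ_i x_i) mod h), where ⊕ denotes nim-sum (XOR). -/
/-!
The claimed value `v x = (⨁ᵢ ⌊xᵢ/h⌋) * h + (∑ᵢ xᵢ) % h` satisfies both mex conditions.
No move preserves it: a move removes `d > 0` tokens in total, so keeping `(∑ᵢ xᵢ) % h` forces
`h ∣ d`. A cyclic move has `d < h`, and a single-heap move that keeps the nim-sum of the quotients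
keeps the quotient of its heap, hence also removes fewer than `h` tokens.
Conversely, let `g < v x`. If `⌊g/h⌋` is below the nim-sum of the quotients, Bouton's lemma lowers
the quotient of one heap to reach `⌊g/h⌋`, and the new remainder of that heap is chosen to fix the
total modulo `h`. Otherwise a cyclic move takes `(∑ᵢ xᵢ) % h - g % h` tokens out of the
remainders `xᵢ % h`, which leaves every quotient unchanged.
-/

open Finset

/-- mex of a set of naturals. -/
noncomputable def mex (T : Set ℕ) : ℕ := sInf Tᶜ

/-- Grundy value of the subtraction game Subtraction(S) on a heap of size x. -/
noncomputable def subG (S : Set ℕ) (x : ℕ) : ℕ :=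
  mex {g | ∃ s, ∃ _ : s ∈ S ∧ 0 < s ∧ s ≤ x, g = subG S (x - s)}
termination_by x
decreasing_by rename_i hs; obtain ⟨_, h1, h2⟩ := hs; omega

/-- Moves of the generalized cyclic Nimhoff GCN(h; S_1, ..., S_n). -/
def gcnMove {n : ℕ} (h : ℕ) (S : Fin n → Set ℕ) (x y : Fin n → ℕ) : Prop :=
  (∃ i, ∃ s, s ∈ S i ∧ 0 < s ∧ s ≤ x i ∧ y = Function.update x i (x i - s)) ∨
  (∃ s : Fin n → ℕ, (∀ i, s i ≤ x i) ∧ 0 < ∑ i, s i ∧ ∑ i, s i < h ∧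
    y = fun i => x i - s i)

theorem gcnMove_sum_lt {n h : ℕ} {S : Fin n → Set ℕ} {x y : Fin n → ℕ}
    (m : gcnMove h S x y) : ∑ i, y i < ∑ i, x i := by
  rcases m with ⟨i, s, _, hs0, hsx, rfl⟩ | ⟨s, hle, hpos, _, rfl⟩
  · refine Finset.sum_lt_sum (fun j _ => ?_) ⟨i, Finset.mem_univ i, ?_⟩
    · by_cases hj : j = i
      · subst hj; simp [Function.update]
      · simp [Function.update, hj]
    · simp [Function.update]; omega
  · obtain ⟨i, _, hi⟩ := Finset.exists_ne_zero_of_sum_ne_zero (by omega :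
      ∑ i, s i ≠ 0)
    refine Finset.sum_lt_sum (fun j _ => by omega) ⟨i, Finset.mem_univ i, ?_⟩
    have := hle i; omega

/-- Grundy value of a position of the generalized cyclic Nimhoff. -/
noncomputable def gcnGrundy (n h : ℕ) (S : Fin n → Set ℕ) (x : Fin n → ℕ) : ℕ :=
  mex {g | ∃ y, ∃ _ : gcnMove h S x y, g = gcnGrundy n h S y}
termination_by ∑ i, x i
decreasing_by exact gcnMove_sum_lt ‹_›

open Function

theorem mex_eq_of_notMem_of_forall_lt_mem {T : Set ℕ} {v : ℕ} (hv : v ∉ T)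
    (hlt : ∀ g < v, g ∈ T) : mex T = v :=
  le_antisymm (Nat.sInf_le (show v ∈ Tᶜ from hv)) <|
    le_of_not_gt fun hc => Nat.sInf_mem (s := Tᶜ) ⟨v, hv⟩ (hlt _ hc)

theorem gcnGrundy_eq_of_forall_gcnMove {n h : ℕ} {S : Fin n → Set ℕ} (f : (Fin n → ℕ) → ℕ)
    (hne : ∀ x y, gcnMove h S x y → f y ≠ f x)
    (hex : ∀ x, ∀ g < f x, ∃ y, gcnMove h S x y ∧ f y = g) (x : Fin n → ℕ) :
    gcnGrundy n h S x = f x := by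
  rw [gcnGrundy]
  refine mex_eq_of_notMem_of_forall_lt_mem ?_ fun g hg => ?_
  · rintro ⟨y, m, hy⟩
    exact hne x y m (hy ▸ (gcnGrundy_eq_of_forall_gcnMove f hne hex y).symm)
  · obtain ⟨y, m, rfl⟩ := hex x g hg
    exact ⟨y, m, (gcnGrundy_eq_of_forall_gcnMove f hne hex y).symm⟩
termination_by ∑ i, x i
decreasing_by all_goals exact gcnMove_sum_lt m

section NimSum

variable {ι : Type*}

def nimSum (s : Finset ι) (f : ι → ℕ) : ℕ :=
  s.fold (· ^^^ ·) 0 f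

theorem nimSum_insert [DecidableEq ι] {s : Finset ι} {a : ι} (f : ι → ℕ) (ha : a ∉ s) :
    nimSum (insert a s) f = f a ^^^ nimSum s f :=
  fold_insert ha

theorem nimSum_eq_xor_nimSum_erase [DecidableEq ι] {s : Finset ι} {i : ι} (f : ι → ℕ)
    (hi : i ∈ s) : nimSum s f = f i ^^^ nimSum (s.erase i) f := by
  rw [← nimSum_insert f (notMem_erase i s), insert_erase hi]

theorem nimSum_update [DecidableEq ι] {s : Finset ι} {i : ι} (f : ι → ℕ) (b : ℕ) (hi : i ∈ s) :
    nimSum s (update f i b) = nimSum s f ^^^ f i ^^^ b := by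
  have hcongr : nimSum (s.erase i) (update f i b) = nimSum (s.erase i) f :=
    fold_congr fun j hj => update_of_ne (ne_of_mem_erase hj) _ _
  rw [nimSum_eq_xor_nimSum_erase _ hi, nimSum_eq_xor_nimSum_erase f hi, hcongr, update_self]
  simp [Nat.xor_comm]

/-- Bouton's lemma. -/
theorem exists_xor_lt_of_lt_nimSum [DecidableEq ι] (f : ι → ℕ) (s : Finset ι) :
    ∀ Y < nimSum s f, ∃ i ∈ s, nimSum s f ^^^ Y ^^^ f i < f i := by
  induction s using Finset.induction with
  | empty => simp [nimSum]
  | @insert a s ha ih =>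
    intro Y hY
    rw [nimSum_insert f ha] at hY ⊢
    rcases Nat.lt_xor_cases hY with hlt | hlt
    · refine ⟨a, mem_insert_self a s, ?_⟩
      convert hlt using 1
      simp [Nat.xor_comm, Nat.xor_left_comm]
    · obtain ⟨i, hi, hlt⟩ := ih _ hlt
      refine ⟨i, mem_insert_of_mem hi, ?_⟩
      convert hlt using 1
      simp [Nat.xor_comm, Nat.xor_left_comm]

theorem exists_lt_nimSum_update_eq [Fintype ι] [DecidableEq ι] {f : ι → ℕ} {Y : ℕ}
    (hY : Y < nimSum univ f) : ∃ i, ∃ b < f i, nimSum univ (update f i b) = Y := by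
  obtain ⟨i, -, hi⟩ := exists_xor_lt_of_lt_nimSum f univ Y hY
  refine ⟨i, _, hi, ?_⟩
  rw [nimSum_update _ _ (mem_univ i)]
  simp [Nat.xor_comm, Nat.xor_left_comm]

theorem nimSum_div_update [DecidableEq ι] (s : Finset ι) (x : ι → ℕ) (i : ι) (a h : ℕ) :
    nimSum s (fun j => update x i a j / h) = nimSum s (update (fun j => x j / h) i (a / h)) :=
  congrArg _ (comp_update (· / h) x i a)

end NimSum

theorem exists_le_sum_eq {ι : Type*} [DecidableEq ι] (f : ι → ℕ) (s : Finset ι) :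
    ∀ t ≤ ∑ i ∈ s, f i, ∃ g ≤ f, ∑ i ∈ s, g i = t := by
  induction s using Finset.induction with
  | empty => intro t ht; exact ⟨0, fun _ => Nat.zero_le _, by simp at ht ⊢; omega⟩
  | @insert a s ha ih =>
    intro t ht
    rw [sum_insert ha] at ht
    obtain ⟨g, hg, hsum⟩ := ih (t - min (f a) t) (by omega)
    refine ⟨update g a (min (f a) t), update_le_iff.2 ⟨min_le_left _ _, fun j _ => hg j⟩, ?_⟩
    rw [sum_insert ha, update_self, sum_update_of_notMem ha, hsum]
    omega

theorem Nat.sub_div_eq_div_of_le_mod {a b c : ℕ} (hb : b ≤ a % c) : (a - b) / c = a / c := by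
  rcases c.eq_zero_or_pos with rfl | hc
  · simp
  have := Nat.div_add_mod a c
  have := Nat.mod_lt a hc
  rw [show a - b = (a % c - b) + c * (a / c) by omega, Nat.add_mul_div_left _ _ hc,
    Nat.div_eq_of_lt (by omega), zero_add]

theorem Nat.sub_mod_ne_mod {a b c : ℕ} (hb : 0 < b) (hbc : b < c) (hba : b ≤ a) :
    (a - b) % c ≠ a % c := by
  intro e
  have hdvd : c ∣ b := by
    simpa [Nat.sub_sub_self hba] using (Nat.modEq_iff_dvd' (Nat.sub_le a b)).mp e
  exact (Nat.le_of_dvd hb hdvd).not_gt hbc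

theorem Nat.exists_lt_add_mod_eq {c : ℕ} (hc : 0 < c) (a b : ℕ) :
    ∃ r < c, (r + a) % c = b % c := by
  have : NeZero c := ⟨hc.ne'⟩
  refine ⟨((b : ZMod c) - a).val, ZMod.val_lt _, ?_⟩
  rw [← ZMod.natCast_eq_natCast_iff']
  push_cast
  simp

section NimhoffValue

variable {n h : ℕ}

def nimhoffValue (h : ℕ) (x : Fin n → ℕ) : ℕ :=
  nimSum univ (fun i => x i / h) * h + (∑ i, x i) % h

theorem nimhoffValue_div (hh : 0 < h) (x : Fin n → ℕ) :
    nimhoffValue h x / h = nimSum univ (fun i => x i / h) := by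
  rw [nimhoffValue, mul_comm, Nat.mul_add_div hh, Nat.div_eq_of_lt (Nat.mod_lt _ hh), add_zero]

theorem nimhoffValue_mod (x : Fin n → ℕ) : nimhoffValue h x % h = (∑ i, x i) % h := by
  rw [nimhoffValue, Nat.mul_add_mod', Nat.mod_mod]

theorem nimhoffValue_eq_of_div_of_mod {x : Fin n → ℕ} {g : ℕ}
    (hq : nimSum univ (fun i => x i / h) = g / h) (hr : (∑ i, x i) % h = g % h) :
    nimhoffValue h x = g := by
  rw [nimhoffValue, hq, hr, Nat.div_add_mod']

theorem nimhoffValue_ne_of_gcnMove {S : Fin n → Set ℕ} (hh : 0 < h) {x y : Fin n → ℕ}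
    (m : gcnMove h S x y) : nimhoffValue h y ≠ nimhoffValue h x := by
  intro e
  have hq := congrArg (· / h) e
  have hr := congrArg (· % h) e
  simp only [nimhoffValue_div hh, nimhoffValue_mod] at hq hr
  rcases m with ⟨i, s, -, hs0, hsx, rfl⟩ | ⟨s, hle, hpos, hlt, rfl⟩
  · rw [nimSum_div_update, nimSum_update _ _ (mem_univ i)] at hq
    have hquot : (x i - s) / h = x i / h := (Nat.eq_of_xor_eq_zero <| Nat.xor_right_inj.1 <|
      (Nat.xor_assoc _ _ _).symm.trans (hq.trans (Nat.xor_zero _).symm)).symm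
    have hslt : s < h := by
      have hx := Nat.div_add_mod (x i) h
      have hxs := Nat.div_add_mod (x i - s) h
      rw [hquot] at hxs
      have := Nat.mod_lt (x i) hh
      omega
    have hsum : ∑ j, update x i (x i - s) j = ∑ j, x j - s := by
      rw [sum_update_of_mem (mem_univ i), sdiff_singleton_eq_erase,
        ← add_sum_erase _ _ (mem_univ i)]
      omega
    rw [hsum] at hr
    exact Nat.sub_mod_ne_mod hs0 hslt (hsx.trans (single_le_sum (fun j _ => Nat.zero_le (x j))
      (mem_univ i))) hr
  · rw [sum_tsub_distrib _ fun i _ => hle i] at hr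
    exact Nat.sub_mod_ne_mod hpos hlt (sum_le_sum fun i _ => hle i) hr

theorem exists_gcnMove_nimhoffValue_eq_of_div_lt (hh : 0 < h) {x : Fin n → ℕ} {g : ℕ}
    (hg : g / h < nimSum univ (fun i => x i / h)) :
    ∃ y, gcnMove h (fun _ => {s : ℕ | 0 < s}) x y ∧ nimhoffValue h y = g := by
  obtain ⟨i, q, hqi, hnim⟩ := exists_lt_nimSum_update_eq hg
  obtain ⟨r, hrh, hr⟩ := Nat.exists_lt_add_mod_eq hh (∑ j ∈ univ \ {i}, x j) g
  have hlt : q * h + r < x i := by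
    have := Nat.div_mul_le_self (x i) h
    have := Nat.mul_le_mul_right h (Nat.succ_le_of_lt hqi)
    rw [Nat.succ_mul] at this
    omega
  have hdiv : (q * h + r) / h = q := by
    rw [mul_comm, Nat.mul_add_div hh, Nat.div_eq_of_lt hrh, add_zero]
  refine ⟨update x i (q * h + r), Or.inl ⟨i, x i - (q * h + r), Nat.sub_pos_of_lt hlt,
    Nat.sub_pos_of_lt hlt, Nat.sub_le _ _, by rw [Nat.sub_sub_self hlt.le]⟩,
    nimhoffValue_eq_of_div_of_mod ?_ ?_⟩
  · rw [nimSum_div_update, hdiv, hnim]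
  · rw [sum_update_of_mem (mem_univ i), add_assoc, Nat.mul_add_mod', hr]

theorem exists_gcnMove_nimhoffValue_eq_of_div_eq (hh : 0 < h) {x : Fin n → ℕ} {g : ℕ}
    (hq : g / h = nimSum univ (fun i => x i / h)) (hr : g % h < (∑ i, x i) % h) :
    ∃ y, gcnMove h (fun _ => {s : ℕ | 0 < s}) x y ∧ nimhoffValue h y = g := by
  have hR := Nat.mod_lt (∑ i, x i) hh
  obtain ⟨s, hs, hsum⟩ := exists_le_sum_eq (fun i => x i % h) univ ((∑ i, x i) % h - g % h) <| by
    have := sum_nat_mod univ h x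
    have := Nat.mod_le (∑ i, x i % h) h
    omega
  have hsx : ∀ i, s i ≤ x i := fun i => (hs i).trans (Nat.mod_le _ _)
  refine ⟨fun i => x i - s i, Or.inr ⟨s, hsx, by omega, by omega, rfl⟩,
    nimhoffValue_eq_of_div_of_mod ?_ ?_⟩
  · rw [hq]
    exact fold_congr fun i _ => Nat.sub_div_eq_div_of_le_mod (hs i)
  · have := Nat.div_add_mod (∑ i, x i) h
    rw [sum_tsub_distrib _ fun i _ => hsx i, hsum,
      show ∑ i, x i - ((∑ i, x i) % h - g % h) = h * ((∑ i, x i) / h) + g % h by omega,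
      Nat.mul_add_mod, Nat.mod_mod]

theorem exists_gcnMove_nimhoffValue_eq (hh : 0 < h) {x : Fin n → ℕ} {g : ℕ}
    (hg : g < nimhoffValue h x) :
    ∃ y, gcnMove h (fun _ => {s : ℕ | 0 < s}) x y ∧ nimhoffValue h y = g := by
  have hdiv : g / h ≤ nimSum univ (fun i => x i / h) :=
    nimhoffValue_div hh x ▸ Nat.div_le_div_right hg.le
  rcases hdiv.lt_or_eq with hlt | heq
  · exact exists_gcnMove_nimhoffValue_eq_of_div_lt hh hlt
  · refine exists_gcnMove_nimhoffValue_eq_of_div_eq hh heq ?_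
    have := Nat.div_add_mod' g h
    have := Nat.div_add_mod' (nimhoffValue h x) h
    rw [nimhoffValue_div hh, nimhoffValue_mod, ← heq] at this
    omega

end NimhoffValue

/-- Grundy value of the cyclic Nimhoff (GCN with every `S_i = ℕ₊`). -/
theorem cyclic_nimhoff_grundy (n h : ℕ) (hh : 0 < h) (x : Fin n → ℕ) :
    gcnGrundy n h (fun _ => {s : ℕ | 0 < s}) x =
      (Finset.univ.fold (· ^^^ · : ℕ → ℕ → ℕ) 0 (fun i => x i / h)) * h + (∑ i, x i) % h :=
  gcnGrundy_eq_of_forall_gcnMove (nimhoffValue h) (fun _ _ => nimhoffValue_ne_of_gcnMove hh)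
    (fun _ _ => exists_gcnMove_nimhoffValue_eq hh) x
end

section
/- Let l ≥ 1 and suppose S is a set of positive integers with {1,...,l-1} ⊆ S ⊆ ℕ₊ \ { k·l : k ∈ ℕ₊ }. Then the Grundy value of Subtraction(S) on a heap of size x is G_S(x) = x mod l. -/
open Finset

/-!
From a heap `x` one reaches every residue `r < x % l` by removing `x % l - r ∈ {1, …, l-1}`,
and never the residue `x % l` itself, since no move is a multiple of `l`. Hence `x ↦ x % l`
satisfies the mex recursion defining the Grundy function.
-/

theorem mex_eq_of_forall_lt_mem {T : Set ℕ} {n : ℕ} (hlt : ∀ r < n, r ∈ T) (hn : n ∉ T) :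
    mex T = n :=
  le_antisymm (Nat.sInf_le hn) (le_of_not_gt fun h => Nat.sInf_mem (s := Tᶜ) ⟨n, hn⟩ (hlt _ h))

theorem subG_eq_of_reach_of_avoid {S : Set ℕ} {f : ℕ → ℕ}
    (hreach : ∀ x, ∀ r < f x, ∃ s ∈ S, 0 < s ∧ s ≤ x ∧ f (x - s) = r)
    (havoid : ∀ x, ∀ s ∈ S, 0 < s → s ≤ x → f (x - s) ≠ f x) :
    subG S = f := by
  funext x
  induction x using Nat.strong_induction_on with
  | _ x ih =>
  rw [subG]
  apply mex_eq_of_forall_lt_mem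
  · intro r hr
    obtain ⟨s, hs, hs0, hsx, rfl⟩ := hreach x r hr
    exact ⟨s, ⟨hs, hs0, hsx⟩, (ih _ (by omega)).symm⟩
  · rintro ⟨s, ⟨hs, hs0, hsx⟩, heq⟩
    exact havoid x s hs hs0 hsx (by rw [heq, ih _ (by omega)])

theorem Nat.sub_sub_mod_eq {l x r : ℕ} (hr : r < x % l) : (x - (x % l - r)) % l = r := by
  have hx : x - (x % l - r) = r + l * (x / l) := by
    have hdiv := Nat.div_add_mod x l
    generalize x % l = m at hr hdiv ⊢
    omega
  rcases Nat.eq_zero_or_pos l with rfl | hl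
  · simpa using hx
  · rw [hx, Nat.add_mul_mod_self_left, Nat.mod_eq_of_lt (hr.trans (Nat.mod_lt x hl))]

theorem Nat.sub_mod_ne_mod_s4 {l x s : ℕ} (hsx : s ≤ x) (hs : ¬ l ∣ s) : (x - s) % l ≠ x % l :=
  fun h => hs (by simpa [Nat.sub_sub_self hsx] using (Nat.modEq_iff_dvd' (Nat.sub_le x s)).mp h)

/-- if `{1,...,l-1} ⊆ S ⊆ ℕ₊ \ {k·l : k ∈ ℕ₊}` then
`G_S(x) = x mod l`. -/
theorem subG_mod (l : ℕ) (hl : 1 ≤ l) (S : Set ℕ)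
    (hsub : ∀ s : ℕ, 0 < s → s < l → s ∈ S)
    (hsup : ∀ s ∈ S, 0 < s ∧ ¬∃ k : ℕ, 0 < k ∧ s = k * l)
    (x : ℕ) : subG S x = x % l := by
  refine congrFun (subG_eq_of_reach_of_avoid (f := (· % l)) ?_ ?_) x
  · intro x r hr
    have hlt : x % l < l := Nat.mod_lt x hl
    exact ⟨x % l - r, hsub _ (by omega) (by omega), by omega,
      (Nat.sub_le _ _).trans (Nat.mod_le x l), Nat.sub_sub_mod_eq hr⟩
  · intro x s hs hs0 hsx
    refine Nat.sub_mod_ne_mod_s4 hsx ?_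
    rintro ⟨k, rfl⟩
    exact (hsup _ hs).2 ⟨k, Nat.pos_of_mul_pos_left hs0, Nat.mul_comm l k⟩
end

section
/- Let m_1, ..., m_n be nonnegative integers with nim-sum Q = m_1 ⊕ ... ⊕ m_n, and let Q' < Q. Then there exists an index j and a value g < m_j such that Q' = m_1 ⊕ ... ⊕ m_{j-1} ⊕ g ⊕ m_{j+1} ⊕ ... ⊕ m_n. -/
open Finset

/-! Induction on the number of heaps. For two heaps the claim is `Nat.lt_xor_cases`:
`q < b ^^^ c` gives `q ^^^ c < b` or `q ^^^ b < c`. Splitting off one heap `b = m a` with `c` the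
nim-sum of the others, the first case lowers heap `a` to `q ^^^ c`, and the second asks the rest to
reach `q ^^^ m a < c`, which the induction hypothesis does. -/

section NimSum

variable {ι : Type*} [DecidableEq ι]

lemma fold_xor_update_of_notMem {s : Finset ι} {a : ι} (ha : a ∉ s) (m : ι → ℕ) (g : ℕ) :
    s.fold (· ^^^ · : ℕ → ℕ → ℕ) 0 (Function.update m a g) =
      s.fold (· ^^^ · : ℕ → ℕ → ℕ) 0 m :=
  Finset.fold_congr fun _ hi => Function.update_of_ne (ne_of_mem_of_not_mem hi ha) _ _

lemma exists_lt_update_fold_xor_eq (s : Finset ι) (m : ι → ℕ) {q : ℕ}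
    (hq : q < s.fold (· ^^^ · : ℕ → ℕ → ℕ) 0 m) :
    ∃ j ∈ s, ∃ g < m j, q = s.fold (· ^^^ · : ℕ → ℕ → ℕ) 0 (Function.update m j g) := by
  induction s using Finset.induction generalizing q with
  | empty => simp at hq
  | @insert a t ha ih =>
    rw [Finset.fold_insert ha] at hq
    rcases Nat.lt_xor_cases hq with hlow | hrest
    · refine ⟨a, Finset.mem_insert_self a t, _, hlow, ?_⟩
      rw [Finset.fold_insert ha, Function.update_self, fold_xor_update_of_notMem ha,
        Nat.xor_assoc, Nat.xor_self, Nat.xor_zero]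
    · obtain ⟨j, hj, g, hg, hq'⟩ := ih hrest
      have hja : a ≠ j := fun h => ha (h ▸ hj)
      refine ⟨j, Finset.mem_insert_of_mem hj, g, hg, ?_⟩
      rw [Finset.fold_insert ha, Function.update_of_ne hja, ← hq', ← Nat.xor_assoc,
        Nat.xor_comm (m a), Nat.xor_assoc, Nat.xor_self, Nat.xor_zero]

end NimSum

/-- any value below the nim-sum is reached by lowering a single
component. -/
theorem nim_sum_lower (n : ℕ) (m : Fin n → ℕ) (Q' : ℕ)
    (hQ : Q' < Finset.univ.fold (· ^^^ · : ℕ → ℕ → ℕ) 0 m) :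
    ∃ j : Fin n, ∃ g : ℕ, g < m j ∧
      Q' = Finset.univ.fold (· ^^^ · : ℕ → ℕ → ℕ) 0 (Function.update m j g) := by
  obtain ⟨j, -, g, hg, hQ'⟩ := exists_lt_update_fold_xor_eq Finset.univ m hQ
  exact ⟨j, g, hg, hQ'⟩
end
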